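/- Consider a weighted strictly monotone game Γ with weights w_1,…,w_N and unique equilibrium x̄. Along every interior solution x(t) of the replicator dynamics, the weighted Kullback–Leibler divergence W_KL(x̄ ‖ x(t)) = Σ_k w_k Σ_i x̄_{ki} ln(x̄_{ki}/x_{ki}(t)) is strictly decreasing whenever x(t) ≠ x̄, and x(t) converges to x̄ as t → ∞. -/

import Mathlib

/-!
The weighted Kullback–Leibler divergence `V(t) = W_KL(x̄ ‖ x(t))` is a strict Lyapunov function.
Along the replicator dynamics `V' = -∑ₖ wₖ ⟨x̄ₖ - xₖ, rₖ(x)⟩`, and weighted strict monotonicity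
together with the equilibrium inequalities at `x̄` make this sum positive on `Δ \ {x̄}`.
Since `Δ` is compact, the sum is bounded away from `0` outside any ball around `x̄`, and the
trajectory, having bounded velocity, spends a time of fixed length there on each visit far from
`x̄`; as `V ≥ 0` (Gibbs) and `V` is decreasing, this happens only finitely often.
-/

open Filter Topology

noncomputable section

/-- Joint strategy space. -/
abbrev Strat {N : ℕ} (n : Fin N → ℕ) := ∀ k, Fin (n k) → ℝ

/-- `x` lies in `Δ = Δ₁ × ⋯ × Δ_N`. -/
def JointSimplex {N : ℕ} {n : Fin N → ℕ} (x : Strat n) : Prop :=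
  ∀ k, x k ∈ stdSimplex ℝ (Fin (n k))

/-- `x` lies in the interior of `Δ`. -/
def JointInterior {N : ℕ} {n : Fin N → ℕ} (x : Strat n) : Prop :=
  ∀ k, (∀ i, 0 < x k i) ∧ ∑ i, x k i = 1

/-- An interior solution of the replicator dynamics
`ẋ_{ki}/x_{ki} = r_{ki}(x) − ⟨x_k, r_k(x)⟩`. -/
def ReplicatorSolution {N : ℕ} {n : Fin N → ℕ} (r : Strat n → Strat n)
    (x : ℝ → Strat n) : Prop :=
  (∀ t, JointInterior (x t)) ∧
    ∀ t k i, HasDerivAt (fun s => x s k i)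
      (x t k i * (r (x t) k i - ∑ j, x t k j * r (x t) k j)) t


open Finset InformationTheory Real

lemma sub_le_mul_sub_of_hasDerivAt_le {f f' : ℝ → ℝ} {C s t : ℝ} (hst : s ≤ t)
    (hf : ∀ u, HasDerivAt f (f' u) u) (hC : ∀ u ∈ Set.Icc s t, f' u ≤ C) :
    f t - f s ≤ C * (t - s) :=
  (convex_Icc s t).image_sub_le_mul_sub_of_deriv_le
    (fun u _ => (hf u).continuousAt.continuousWithinAt)
    (fun u _ => (hf u).differentiableAt.differentiableWithinAt)
    (fun u hu => by rw [(hf u).deriv]; exact hC u (interior_subset hu))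
    s (Set.left_mem_Icc.2 hst) t (Set.right_mem_Icc.2 hst) hst

section Lyapunov

variable {E : Type*} {K : Set E} {a : E} {G : E → ℝ} {x : ℝ → E} {V : ℝ → ℝ}

theorem lyapunov_lt_of_ne (hG_nonneg : ∀ z ∈ K, 0 ≤ G z) (hG_pos : ∀ z ∈ K, z ≠ a → 0 < G z)
    (hxK : ∀ t, x t ∈ K) (hV : ∀ t, HasDerivAt V (-G (x t)) t) {s t : ℝ} (hst : s < t)
    (hs : x s ≠ a) : V t < V s := by
  have hanti : Antitone V :=
    antitone_of_hasDerivAt_nonpos hV fun u => neg_nonpos.2 (hG_nonneg _ (hxK u))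
  have hslope : ∀ᶠ u in 𝓝[>] s, slope V s u < 0 :=
    (hV s).hasDerivWithinAt.limsup_slope_le' (lt_irrefl s) (neg_neg_of_pos (hG_pos _ (hxK s) hs))
  obtain ⟨u, hu, hsu, hut⟩ := (hslope.and (Ioo_mem_nhdsGT hst)).exists
  exact (hanti hut.le).trans_lt ((slope_neg_iff_of_le hsu.le).1 hu)

theorem tendsto_of_lyapunov [MetricSpace E] (hK : IsCompact K) (hGc : ContinuousOn G K)
    (hG_nonneg : ∀ z ∈ K, 0 ≤ G z) (hG_pos : ∀ z ∈ K, z ≠ a → 0 < G z) (hxK : ∀ t, x t ∈ K)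
    (hx : UniformContinuous x) (hV : ∀ t, HasDerivAt V (-G (x t)) t)
    (hV_bdd : BddBelow (Set.range V)) : Tendsto x atTop (𝓝 a) := by
  have hanti : Antitone V :=
    antitone_of_hasDerivAt_nonpos hV fun u => neg_nonpos.2 (hG_nonneg _ (hxK u))
  rw [Metric.tendsto_nhds]
  intro ε hε
  by_contra hfar
  simp only [not_eventually, not_lt] at hfar
  obtain ⟨δ, hδ, hxδ⟩ := Metric.uniformContinuous_iff.1 hx (ε / 2) (half_pos hε)
  have hKε : IsCompact (K ∩ {z | ε / 2 ≤ dist z a}) :=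
    hK.inter_right (isClosed_le continuous_const (continuous_id.dist continuous_const))
  obtain ⟨m, hm, hmG⟩ := hKε.exists_forall_le' (hGc.mono Set.inter_subset_left) (a := 0)
    fun z hz => hG_pos z hz.1 fun h => by
      have : ε / 2 ≤ dist z a := hz.2
      rw [h, dist_self] at this
      linarith
  have hdrop : ∀ t, ε ≤ dist (x t) a → V (t + δ / 2) - V t ≤ -m * (δ / 2) := by
    intro t ht
    have hstay : ∀ u ∈ Set.Icc t (t + δ / 2), m ≤ G (x u) := by
      intro u hu
      have hut : dist (x u) (x t) < ε / 2 := hxδ <| by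
        rw [Real.dist_eq, abs_of_nonneg (by linarith [hu.1])]; linarith [hu.2]
      refine hmG _ ⟨hxK u, ?_⟩
      have := dist_triangle (x t) (x u) a
      rw [dist_comm] at hut
      show ε / 2 ≤ dist (x u) a
      linarith
    simpa using sub_le_mul_sub_of_hasDerivAt_le (by linarith) hV
      fun u hu => neg_le_neg (hstay u hu)
  have hsmall : ∀ᶠ t in atTop, V t - V (t + δ / 2) < m * (δ / 2) := by
    have hL := tendsto_atTop_ciInf hanti hV_bdd
    have : Tendsto (fun t => V t - V (t + δ / 2)) atTop (𝓝 0) := by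
      simpa using hL.sub (hL.comp (tendsto_atTop_add_const_right _ _ tendsto_id))
    exact this.eventually (gt_mem_nhds (by positivity))
  obtain ⟨t, ht, hts⟩ := (hfar.and_eventually hsmall).exists
  linarith [hdrop t ht]

end Lyapunov

lemma sum_mul_log_div_nonneg {ι : Type*} [Fintype ι] {p q : ι → ℝ} (hp : ∀ i, 0 ≤ p i)
    (hq : ∀ i, 0 < q i) (hpq : ∑ i, p i = ∑ i, q i) : 0 ≤ ∑ i, p i * log (p i / q i) := by
  have hterm : ∀ i, p i * log (p i / q i) = q i * klFun (p i / q i) + (p i - q i) := by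
    intro i
    have := (hq i).ne'
    rw [klFun_apply]
    field_simp
    ring
  rw [sum_congr rfl fun i _ => hterm i, sum_add_distrib, sum_sub_distrib, hpq, sub_self, add_zero]
  exact sum_nonneg fun i _ => mul_nonneg (hq i).le (klFun_nonneg (div_nonneg (hp i) (hq i).le))

lemma HasDerivAt.const_mul_log_const_div {f : ℝ → ℝ} {f' t : ℝ} (c : ℝ) (hf : HasDerivAt f f' t)
    (ht : f t ≠ 0) : HasDerivAt (fun s => c * Real.log (c / f s)) (-(c * (f' / f t))) t := by
  have hlog : HasDerivAt (fun s => c * Real.log c - c * Real.log (f s)) (-(c * (f' / f t))) t :=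
    ((hf.log ht).const_mul c).const_sub (c * Real.log c)
  refine hlog.congr_of_eventuallyEq ?_
  filter_upwards [hf.continuousAt.eventually_ne ht] with s hs
  rcases eq_or_ne c 0 with rfl | hc
  · simp
  · rw [Real.log_div hc hs, mul_sub]

lemma norm_replicatorField_le {ι : Type*} [Fintype ι] {p a : ι → ℝ} (hp : p ∈ stdSimplex ℝ ι)
    {M : ℝ} (ha : ‖a‖ ≤ M) : ‖fun i => p i * (a i - ∑ j, p j * a j)‖ ≤ 2 * M := by
  have hM : 0 ≤ M := (norm_nonneg _).trans ha
  have hai : ∀ i, |a i| ≤ M := fun i => (norm_le_pi_norm a i).trans ha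
  have havg : |∑ j, p j * a j| ≤ M := calc
    |∑ j, p j * a j| ≤ ∑ j, p j * M := (abs_sum_le_sum_abs _ _).trans <| sum_le_sum fun j _ => by
      rw [abs_mul, abs_of_nonneg (hp.1 j)]; exact mul_le_mul_of_nonneg_left (hai j) (hp.1 j)
    _ = M := by rw [← sum_mul, hp.2, one_mul]
  refine (pi_norm_le_iff_of_nonneg (by positivity)).2 fun i => ?_
  rw [Real.norm_eq_abs, abs_mul, abs_of_nonneg (hp.1 i)]
  calc p i * |a i - ∑ j, p j * a j| ≤ 1 * (M + M) :=
        mul_le_mul (mem_Icc_of_mem_stdSimplex hp i).2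
          ((abs_sub _ _).trans (add_le_add (hai i) havg)) (abs_nonneg _) zero_le_one
    _ = 2 * M := by ring

section Game

variable {N : ℕ} {n : Fin N → ℕ}

def IsWeightedStrictlyMonotone (r : Strat n → Strat n) (w : Fin N → ℝ) : Prop :=
  ∀ x y : Strat n, JointSimplex x → JointSimplex y → x ≠ y →
    0 < ∑ k, w k * ∑ i, (x k i - y k i) * ((- r x k i) - (- r y k i))

def IsEquilibrium (r : Strat n → Strat n) (xbar : Strat n) : Prop :=
  ∀ k, ∀ zk ∈ stdSimplex ℝ (Fin (n k)), ∑ i, zk i * r xbar k i ≤ ∑ i, xbar k i * r xbar k i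

def weightedKL (w : Fin N → ℝ) (p q : Strat n) : ℝ :=
  ∑ k, w k * ∑ i, p k i * log (p k i / q k i)

/-- `∑ₖ wₖ ⟨pₖ - zₖ, rₖ(z)⟩`: the weighted gain of unilaterally deviating from `z` to `p`. -/
def deviationGain (r : Strat n → Strat n) (w : Fin N → ℝ) (p z : Strat n) : ℝ :=
  ∑ k, w k * ∑ i, (p k i - z k i) * r z k i

lemma JointInterior.jointSimplex {z : Strat n} (h : JointInterior z) : JointSimplex z :=
  fun k => ⟨fun i => ((h k).1 i).le, (h k).2⟩

lemma isCompact_jointSimplex : IsCompact {z : Strat n | JointSimplex z} := by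
  have : {z : Strat n | JointSimplex z} = Set.univ.pi fun k => stdSimplex ℝ (Fin (n k)) := by
    ext z; simp [JointSimplex]
  exact this ▸ isCompact_univ_pi fun k => isCompact_stdSimplex _ _

lemma continuousOn_deviationGain {r : Strat n → Strat n} (hr : ContinuousOn r {z | JointSimplex z})
    (w : Fin N → ℝ) (p : Strat n) : ContinuousOn (deviationGain r w p) {z | JointSimplex z} := by
  unfold deviationGain
  fun_prop

lemma weightedKL_nonneg {w : Fin N → ℝ} (hw : ∀ k, 0 ≤ w k) {p q : Strat n} (hp : JointSimplex p)
    (hq : JointInterior q) : 0 ≤ weightedKL w p q :=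
  sum_nonneg fun k _ => mul_nonneg (hw k) <|
    sum_mul_log_div_nonneg (hp k).1 (hq k).1 (by rw [(hp k).2, (hq k).2])

lemma deviationGain_pos {r : Strat n → Strat n} {w : Fin N → ℝ} (hw : ∀ k, 0 ≤ w k)
    (hmono : IsWeightedStrictlyMonotone r w) {xbar z : Strat n} (hxbar : IsEquilibrium r xbar)
    (hxbarΔ : JointSimplex xbar) (hz : JointSimplex z) (hne : z ≠ xbar) :
    0 < deviationGain r w xbar z := by
  have hgap : 0 ≤ ∑ k, w k * ∑ i, (xbar k i - z k i) * r xbar k i :=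
    sum_nonneg fun k _ => mul_nonneg (hw k) <| by
      simp only [sub_mul, sum_sub_distrib, sub_nonneg]
      exact hxbar k (z k) (hz k)
  have hsplit : ∑ k, w k * ∑ i, (z k i - xbar k i) * (-r z k i - -r xbar k i) =
      deviationGain r w xbar z - ∑ k, w k * ∑ i, (xbar k i - z k i) * r xbar k i := by
    simp only [deviationGain, ← sum_sub_distrib, ← mul_sub]
    congr! 3 with k _ i _
    ring
  linarith [hmono z xbar hz hxbarΔ hne]

lemma hasDerivAt_weightedKL_replicator {r : Strat n → Strat n} {x : ℝ → Strat n}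
    (hx : ReplicatorSolution r x) (w : Fin N → ℝ) {p : Strat n} (hp : ∀ k, ∑ i, p k i = 1)
    (t : ℝ) : HasDerivAt (fun t => weightedKL w p (x t)) (-deviationGain r w p (x t)) t := by
  have hterm : ∀ k i, HasDerivAt (fun t => p k i * log (p k i / x t k i))
      (-(p k i * (r (x t) k i - ∑ j, x t k j * r (x t) k j))) t := by
    intro k i
    have hxi := ((hx.1 t k).1 i).ne'
    simpa only [mul_div_cancel_left₀ _ hxi] using
      HasDerivAt.const_mul_log_const_div (p k i) (hx.2 t k i) hxi
  have hsum : HasDerivAt (fun t => weightedKL w p (x t))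
      (∑ k, w k * ∑ i, -(p k i * (r (x t) k i - ∑ j, x t k j * r (x t) k j))) t :=
    HasDerivAt.fun_sum fun k _ => (HasDerivAt.fun_sum fun i _ => hterm k i).const_mul (w k)
  convert hsum using 1
  simp only [deviationGain, ← sum_neg_distrib]
  congr! 1 with k
  simp only [mul_sub, sub_mul, neg_sub, sum_sub_distrib, ← sum_mul, hp k, one_mul]

lemma ReplicatorSolution.uniformContinuous {r : Strat n → Strat n} {x : ℝ → Strat n}
    (hr : ContinuousOn r {z | JointSimplex z}) (hx : ReplicatorSolution r x) :
    UniformContinuous x := by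
  obtain ⟨M, hM⟩ := isCompact_jointSimplex.exists_bound_of_continuousOn hr
  have hderiv : ∀ t, HasDerivAt x
      (fun k i => x t k i * (r (x t) k i - ∑ j, x t k j * r (x t) k j)) t :=
    fun t => hasDerivAt_pi.2 fun k => hasDerivAt_pi.2 fun i => hx.2 t k i
  have hM₀ : 0 ≤ M := (norm_nonneg _).trans (hM _ (hx.1 0).jointSimplex)
  have hbound : ∀ t, ‖fun k i => x t k i * (r (x t) k i - ∑ j, x t k j * r (x t) k j)‖ ≤ 2 * M :=
    fun t => (pi_norm_le_iff_of_nonneg (by positivity)).2 fun k => norm_replicatorField_le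
      ((hx.1 t).jointSimplex k) ((norm_le_pi_norm _ k).trans (hM _ (hx.1 t).jointSimplex))
  refine (LipschitzWith.of_dist_le' (K := 2 * M) fun s t => ?_).uniformContinuous
  simpa only [dist_eq_norm] using convex_univ.norm_image_sub_le_of_norm_hasDerivWithin_le
    (fun u _ => (hderiv u).hasDerivWithinAt) (fun u _ => hbound u) trivial trivial

end Game

theorem replicator_decreases_KL_in_weighted_strictly_monotone_games
    {N : ℕ} {n : Fin N → ℕ}
    (r : Strat n → Strat n)
    (hr : ContinuousOn r {z | JointSimplex z})
    -- Γ is weighted strictly monotone with weights w (pseudo-gradient F_k = −r_k)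
    (w : Fin N → ℝ) (hw : ∀ k, 0 < w k)
    (hmono : ∀ x y : Strat n, JointSimplex x → JointSimplex y → x ≠ y →
      0 < ∑ k, w k * ∑ i, (x k i - y k i) * ((- r x k i) - (- r y k i)))
    -- x̄ is the (unique) equilibrium of Γ
    (xbar : Strat n) (hxbarΔ : JointSimplex xbar)
    (hxbar : ∀ k, ∀ zk ∈ stdSimplex ℝ (Fin (n k)),
      ∑ i, zk i * r xbar k i ≤ ∑ i, xbar k i * r xbar k i)
    -- x(t) is any interior solution of the replicator dynamics
    (x : ℝ → Strat n) (hx : ReplicatorSolution r x) :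
    (∀ s t : ℝ, s < t → x s ≠ xbar →
        (∑ k, w k * ∑ i, xbar k i * Real.log (xbar k i / x t k i)) <
        (∑ k, w k * ∑ i, xbar k i * Real.log (xbar k i / x s k i))) ∧
      Tendsto x atTop (𝓝 xbar) := by
  have hw₀ : ∀ k, 0 ≤ w k := fun k => (hw k).le
  have hG_pos : ∀ z ∈ {z | JointSimplex z}, z ≠ xbar → 0 < deviationGain r w xbar z :=
    fun z hz hne => deviationGain_pos hw₀ hmono hxbar hxbarΔ hz hne
  have hG_nonneg : ∀ z ∈ {z | JointSimplex z}, 0 ≤ deviationGain r w xbar z := by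
    intro z hz
    rcases eq_or_ne z xbar with rfl | hne
    · simp [deviationGain]
    · exact (hG_pos z hz hne).le
  have hxΔ : ∀ t, x t ∈ {z | JointSimplex z} := fun t => (hx.1 t).jointSimplex
  have hV := hasDerivAt_weightedKL_replicator hx w fun k => (hxbarΔ k).2
  have hV_bdd : BddBelow (Set.range fun t => weightedKL w xbar (x t)) :=
    ⟨0, Set.forall_mem_range.2 fun t => weightedKL_nonneg hw₀ hxbarΔ (hx.1 t)⟩
  exact ⟨fun s t hst hs => lyapunov_lt_of_ne hG_nonneg hG_pos hxΔ hV hst hs,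
    tendsto_of_lyapunov isCompact_jointSimplex (continuousOn_deviationGain hr w xbar) hG_nonneg
      hG_pos hxΔ (hx.uniformContinuous hr) hV hV_bdd⟩
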